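/- Let n ∈ (0,2) and θ = (1/π)·arccos(n/2). For every complex ω with −1 < Im(ω) < 1, the Wiener–Hopf factorisation identity (π/cosh(πω/2)) · (n/2 + i·sinh(πω/2)) · K₊(ω) = 2π² · K₋(ω) holds, where K₊(ω) = Γ((3+2θ−iω)/4)·Γ((3−2θ−iω)/4) / (2^{iω/2}·Γ((1−iω)/2)) and K₋(ω) = 2^{−iω/2}·Γ((1+iω)/2) / (Γ((1+2θ+iω)/4)·Γ((1−2θ+iω)/4)). (All Gamma factors appearing are evaluated at points of positive real part, hence are finite and nonzero.) -/
import Mathlib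


open Real Complex Filter Topology

/-- θ = (1/π)·arccos(n/2). -/
noncomputable def theta (n : ℝ) : ℝ := Real.arccos (n / 2) / π

/-- K₊(ω) = Γ((3+2θ−iω)/4)·Γ((3−2θ−iω)/4) / (2^{iω/2}·Γ((1−iω)/2)),
where 2^{z} := exp(z·log 2). -/
noncomputable def Kplus (θ : ℝ) (ω : ℂ) : ℂ :=
  Complex.Gamma ((3 + 2 * (θ : ℂ) - Complex.I * ω) / 4) *
    Complex.Gamma ((3 - 2 * (θ : ℂ) - Complex.I * ω) / 4) /
    (Complex.exp ((Complex.I * ω / 2) * (Real.log 2 : ℂ)) *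
      Complex.Gamma ((1 - Complex.I * ω) / 2))

/-- K₋(ω) = 2^{−iω/2}·Γ((1+iω)/2) / (Γ((1+2θ+iω)/4)·Γ((1−2θ+iω)/4)),
where 2^{z} := exp(z·log 2). -/
noncomputable def Kminus (θ : ℝ) (ω : ℂ) : ℂ :=
  Complex.exp ((-(Complex.I * ω) / 2) * (Real.log 2 : ℂ)) *
    Complex.Gamma ((1 + Complex.I * ω) / 2) /
    (Complex.Gamma ((1 + 2 * (θ : ℂ) + Complex.I * ω) / 4) *
      Complex.Gamma ((1 - 2 * (θ : ℂ) + Complex.I * ω) / 4))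

set_option maxHeartbeats 1600000 in
/-- The Wiener–Hopf factorisation identity K(ω)·K₊(ω) = 2π²·K₋(ω) on the strip
−1 < Im(ω) < 1, where K(ω) = (π/cosh(πω/2))·(n/2 + i·sinh(πω/2)). -/
theorem wiener_hopf_factorisation (n : ℝ) (hn : n ∈ Set.Ioo (0 : ℝ) 2)
    (ω : ℂ) (hω : -1 < ω.im ∧ ω.im < 1) :
    ((π : ℂ) / Complex.cosh ((π : ℂ) * ω / 2)) *
        (((n : ℂ) / 2) + Complex.I * Complex.sinh ((π : ℂ) * ω / 2)) *
        Kplus (theta n) ω =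
      2 * (π : ℂ) ^ 2 * Kminus (theta n) ω := by
  obtain ⟨hn0, hn2⟩ := hn
  obtain ⟨hω1, hω2⟩ := hω
  set t := theta n with htdef
  have hπ : (0:ℝ) < π := Real.pi_pos
  have ht0 : 0 < t := div_pos (Real.arccos_pos.mpr (by linarith)) hπ
  have ht1 : t < 1/2 := by
    rw [htdef, theta, div_lt_iff₀ hπ]
    have := Real.arccos_lt_pi_div_two.mpr (show 0 < n/2 by linarith)
    linarith
  have hπt : (π:ℝ) * t = Real.arccos (n/2) := by
    rw [htdef, theta]; field_simp
  have hcosR : Real.cos (π * t) = n/2 := by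
    rw [hπt]; exact Real.cos_arccos (by linarith) (by linarith)
  have hcosC : ((n:ℂ)/2) = Complex.cos ((π:ℂ) * t) := by
    rw [← Complex.ofReal_mul, ← Complex.ofReal_cos, hcosR]; push_cast; ring
  set a : ℂ := (1 + 2 * (t:ℂ) + Complex.I * ω) / 4 with ha
  set b : ℂ := (1 - 2 * (t:ℂ) + Complex.I * ω) / 4 with hb
  have hare : a.re = (1 + 2*t - ω.im)/4 := by
    simp [ha, Complex.div_re, Complex.add_re, Complex.mul_re]; ring
  have hbre : b.re = (1 - 2*t - ω.im)/4 := by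
    simp [hb, Complex.div_re, Complex.add_re, Complex.sub_re, Complex.mul_re]; ring
  -- Gamma nonvanishing
  have hGa : Complex.Gamma a ≠ 0 :=
    Complex.Gamma_ne_zero_of_re_pos (by rw [hare]; linarith)
  have hG2 : Complex.Gamma (1 - a) ≠ 0 :=
    Complex.Gamma_ne_zero_of_re_pos (by simp [Complex.sub_re, hare]; linarith)
  have hG1 : Complex.Gamma (1 - b) ≠ 0 :=
    Complex.Gamma_ne_zero_of_re_pos (by simp [Complex.sub_re, hbre]; linarith)
  have hG3 : Complex.Gamma ((1 - Complex.I * ω)/2) ≠ 0 :=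
    Complex.Gamma_ne_zero_of_re_pos (by
      simp [Complex.div_re, Complex.sub_re, Complex.mul_re]; linarith)
  have hG4 : Complex.Gamma ((1 + Complex.I * ω)/2) ≠ 0 :=
    Complex.Gamma_ne_zero_of_re_pos (by
      simp [Complex.div_re, Complex.add_re, Complex.mul_re]; linarith)
  -- reflection formulas
  have h1 := Complex.Gamma_mul_Gamma_one_sub a
  have h2 := Complex.Gamma_mul_Gamma_one_sub b
  have h3 := Complex.Gamma_mul_Gamma_one_sub ((1 - Complex.I * ω)/2)
  have e13 : (1 : ℂ) - (1 - Complex.I * ω)/2 = (1 + Complex.I * ω)/2 := by ring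
  have e23 : Complex.sin ((π:ℂ) * ((1 - Complex.I * ω)/2)) =
      Complex.cosh ((π:ℂ) * ω / 2) := by
    rw [show (π:ℂ) * ((1 - Complex.I * ω)/2) = π/2 - ((π:ℂ)*ω/2) * Complex.I by ring,
      Complex.sin_pi_div_two_sub, Complex.cos_mul_I]
  rw [e13, e23] at h3
  have hcoshne : Complex.cosh ((π:ℂ) * ω / 2) ≠ 0 := by
    intro h
    rw [h, div_zero] at h3
    exact mul_ne_zero hG3 hG4 h3
  have hsina : Complex.sin ((π:ℂ) * a) ≠ 0 := by
    intro h
    rw [h, div_zero] at h1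
    exact mul_ne_zero hGa hG2 h1
  -- trig identity
  have htrig : Complex.cos ((π:ℂ) * t) + Complex.I * Complex.sinh ((π:ℂ)*ω/2) =
      2 * Complex.sin ((π:ℂ) * a) * Complex.sin ((π:ℂ) * b) := by
    have key := Complex.cos_sub_cos ((π:ℂ)*t) ((π:ℂ)/2 + ((π:ℂ)*ω/2) * Complex.I)
    have ecos : Complex.cos ((π:ℂ)/2 + ((π:ℂ)*ω/2) * Complex.I) =
        -(Complex.sinh ((π:ℂ)*ω/2) * Complex.I) := by
      rw [Complex.cos_add, Complex.sin_mul_I]; simp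
    have eA : ((π:ℂ)*t + ((π:ℂ)/2 + ((π:ℂ)*ω/2) * Complex.I))/2 = (π:ℂ) * a := by
      rw [ha]; ring
    have eB : ((π:ℂ)*t - ((π:ℂ)/2 + ((π:ℂ)*ω/2) * Complex.I))/2 = -((π:ℂ) * b) := by
      rw [hb]; ring
    rw [ecos, eA, eB, Complex.sin_neg] at key
    linear_combination key
  -- rewrite the Gamma arguments in Kplus/Kminus
  have ka1 : (3 + 2 * (t:ℂ) - Complex.I * ω) / 4 = 1 - b := by rw [hb]; ring
  have ka2 : (3 - 2 * (t:ℂ) - Complex.I * ω) / 4 = 1 - a := by rw [ha]; ring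
  have hE2 : Complex.exp ((-(Complex.I * ω) / 2) * (Real.log 2 : ℂ)) =
      (Complex.exp ((Complex.I * ω / 2) * (Real.log 2 : ℂ)))⁻¹ := by
    rw [← Complex.exp_neg]; congr 1; ring
  have hπne : (π:ℂ) ≠ 0 := Complex.ofReal_ne_zero.mpr Real.pi_ne_zero
  have hEne : Complex.exp ((Complex.I * ω / 2) * (Real.log 2 : ℂ)) ≠ 0 :=
    Complex.exp_ne_zero _
  by_cases hb0 : b = 0
  · -- degenerate case: the middle factor and Kminus both vanish
    have hF : ((n:ℂ)/2) + Complex.I * Complex.sinh ((π:ℂ)*ω/2) = 0 := by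
      rw [hcosC, htrig, hb0]; simp
    have hKm : Kminus t ω = 0 := by
      rw [Kminus, ← hb, hb0]
      simp [Complex.Gamma_zero]
    rw [hF, hKm]; ring
  · have hGb : Complex.Gamma b ≠ 0 := by
      apply Complex.Gamma_ne_zero
      intro m
      cases m with
      | zero => simpa using hb0
      | succ k =>
        intro h
        have : b.re = -(k+1 : ℕ) := by rw [h]; simp
        rw [hbre] at this
        push_cast at this
        linarith [show (0:ℝ) ≤ (k:ℝ) from Nat.cast_nonneg k]
    have hsinb : Complex.sin ((π:ℂ) * b) ≠ 0 := by
      intro h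
      rw [h, div_zero] at h2
      exact mul_ne_zero hGb hG1 h2
    -- solve for the "plus side" Gammas
    rw [eq_div_iff hsina] at h1
    rw [eq_div_iff hsinb] at h2
    rw [eq_div_iff hcoshne] at h3
    have e1 : Complex.Gamma (1 - b) =
        (π:ℂ) / (Complex.sin ((π:ℂ)*b) * Complex.Gamma b) := by
      rw [eq_div_iff (mul_ne_zero hsinb hGb)]; linear_combination h2
    have e2 : Complex.Gamma (1 - a) =
        (π:ℂ) / (Complex.sin ((π:ℂ)*a) * Complex.Gamma a) := by
      rw [eq_div_iff (mul_ne_zero hsina hGa)]; linear_combination h1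
    have e4 : Complex.Gamma ((1 + Complex.I * ω)/2) =
        (π:ℂ) / (Complex.cosh ((π:ℂ)*ω/2) * Complex.Gamma ((1 - Complex.I * ω)/2)) := by
      rw [eq_div_iff (mul_ne_zero hcoshne hG3)]; linear_combination h3
    have aux : ∀ (p C Sa Sb Ga Gb G3 E : ℂ), C ≠ 0 → Sa ≠ 0 → Sb ≠ 0 →
        Ga ≠ 0 → Gb ≠ 0 → G3 ≠ 0 → E ≠ 0 →
        p / C * (2 * Sa * Sb) * (p / (Sb * Gb) * (p / (Sa * Ga)) / (E * G3)) =
          2 * p ^ 2 * (E⁻¹ * (p / (C * G3)) / (Ga * Gb)) := by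
      intro p C Sa Sb Ga Gb G3 E hC hSa hSb hGa' hGb' hG3' hE'
      have hA : p / C * (2 * Sa * Sb) * (p / (Sb * Gb) * (p / (Sa * Ga)) / (E * G3)) =
          2 * p ^ 3 * (Sa * Sa⁻¹) * (Sb * Sb⁻¹) *
            (C⁻¹ * E⁻¹ * G3⁻¹ * Ga⁻¹ * Gb⁻¹) := by ring
      rw [hA, mul_inv_cancel₀ hSa, mul_inv_cancel₀ hSb]
      ring
    rw [Kplus, Kminus, ← ha, ← hb, ka1, ka2, hcosC, htrig, e1, e2, e4, hE2]
    exact aux _ _ _ _ _ _ _ _ hcoshne hsina hsinb hGa hGb hG3 hEne
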